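/- Let h be a positive integer and 𝒯 = {T_i : i ∈ I} a family of 1-Helly hereditary classes of constraint languages. Define T = {Γ : Γ belongs to all but at most h of the classes T_i}. Then T is (h+1)-Helly: if every sublanguage of Γ of size at most h+1 belongs to T, then Γ belongs to T. -/

import Mathlib

/-! A language `Γ` lies outside `T i` only because of a single relation `R ∈ Γ` with `{R} ∉ T i`
(1-Hellyness), and then every sublanguage containing `R` lies outside `T i` too (heredity).
So if `Γ` failed `h + 1` of the classes, picking one such relation for each of them would give a
sublanguage with at most `h + 1` relations failing the same `h + 1` classes. -/

section

variable {α I : Type*}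

def OneHelly (C : Set (Set α)) : Prop :=
  ∀ Γ : Set α, (∀ R ∈ Γ, ({R} : Set α) ∈ C) → Γ ∈ C

def Hereditary (C : Set (Set α)) : Prop :=
  ∀ Γ Γ' : Set α, Γ ∈ C → Γ' ⊆ Γ → Γ' ∈ C

theorem OneHelly.exists_singleton_notMem {C : Set (Set α)} (hC : OneHelly C) {Γ : Set α}
    (hΓ : Γ ∉ C) : ∃ R ∈ Γ, ({R} : Set α) ∉ C := by
  by_contra! hall
  exact hΓ (hC Γ hall)

theorem Hereditary.notMem_of_singleton_notMem {C : Set (Set α)} (hC : Hereditary C)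
    {Γ : Set α} {R : α} (hR : R ∈ Γ) (hRC : ({R} : Set α) ∉ C) : Γ ∉ C :=
  fun hΓ ↦ hRC (hC Γ {R} hΓ (Set.singleton_subset_iff.mpr hR))

theorem exists_subset_encard_le_forall_notMem {T : I → Set (Set α)}
    (hHelly : ∀ i, OneHelly (T i)) (hHered : ∀ i, Hereditary (T i)) {Γ : Set α} {J : Set I}
    (hJ : ∀ j ∈ J, Γ ∉ T j) :
    ∃ Γ' ⊆ Γ, Γ'.encard ≤ J.encard ∧ ∀ j ∈ J, Γ' ∉ T j := by
  choose f hfΓ hfT using fun j : J ↦ (hHelly j).exists_singleton_notMem (hJ j j.2)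
  refine ⟨Set.range f, Set.range_subset_iff.mpr hfΓ, ?_, fun j hj ↦ ?_⟩
  · simpa using Set.encard_image_le f Set.univ
  · exact (hHered j).notMem_of_singleton_notMem (Set.mem_range_self ⟨j, hj⟩) (hfT ⟨j, hj⟩)

end

theorem allButAtMost_h_is_hPlusOne_Helly_general
    {α I : Type*} (T : I → Set (Set α)) (h : ℕ)
    (hHelly : ∀ i, ∀ Γ : Set α, (∀ R ∈ Γ, ({R} : Set α) ∈ T i) → Γ ∈ T i)
    (hHered : ∀ i, ∀ Γ Γ' : Set α, Γ ∈ T i → Γ' ⊆ Γ → Γ' ∈ T i)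
    (Γ : Set α)
    (hsub : ∀ Γ' ⊆ Γ, Γ'.Finite → Γ'.encard ≤ h + 1 →
      {i : I | Γ' ∉ T i}.encard ≤ h) :
    {i : I | Γ ∉ T i}.encard ≤ h := by
  by_contra! hc
  obtain ⟨J, hJΓ, hJcard⟩ := Set.exists_subset_encard_eq (Order.add_one_le_of_lt hc)
  obtain ⟨Γ', hΓ'Γ, hΓ'card, hJΓ'⟩ :=
    exists_subset_encard_le_forall_notMem hHelly hHered hJΓ
  have hΓ'small : Γ'.encard ≤ h + 1 := hΓ'card.trans hJcard.le
  have hΓ'fin : Γ'.Finite := Set.finite_of_encard_le_coe (by exact_mod_cast hΓ'small)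
  have hsucc_le : (h + 1 : ℕ∞) ≤ h :=
    hJcard ▸ (Set.encard_le_encard hJΓ').trans (hsub Γ' hΓ'Γ hΓ'fin hΓ'small)
  exact (Nat.not_succ_le_self h) (by exact_mod_cast hsucc_le)

/-- If `𝒯 = {T i : i ∈ I}` is a family of 1-Helly hereditary classes of
constraint languages (languages being sets of relations of an abstract type
`α`) and `h ≥ 1`, then the class `T` of languages belonging to all but at
most `h` of the classes `T i` is `(h+1)`-Helly. -/
theorem allButAtMost_h_is_hPlusOne_Helly
    {α I : Type*} (T : I → Set (Set α)) (h : ℕ) (hpos : 1 ≤ h)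
    (hHelly : ∀ i, ∀ Γ : Set α, (∀ R ∈ Γ, ({R} : Set α) ∈ T i) → Γ ∈ T i)
    (hHered : ∀ i, ∀ Γ Γ' : Set α, Γ ∈ T i → Γ' ⊆ Γ → Γ' ∈ T i)
    (Γ : Set α)
    (hsub : ∀ Γ' ⊆ Γ, Γ'.Finite → Γ'.encard ≤ h + 1 →
      {i : I | Γ' ∉ T i}.encard ≤ h) :
    {i : I | Γ ∉ T i}.encard ≤ h :=
  allButAtMost_h_is_hPlusOne_Helly_general T h hHelly hHered Γ hsub
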